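/- For 0 < σ < 1 < θ, 0 < ρ < ∞, and any n ≥ 2 and 0 < h ≤ (n+1)^{-θ}, the first-order difference over the n-th right block satisfies ∫_{a_{n,θ}+3n^{-θ}}^{a_{n,θ}+4n^{-θ}} |w_{σ,θ}(ξ+h) − w_{σ,θ}(ξ)|^ρ dξ = h^{σρ+1}/(σρ+1). -/

import Mathlib

open MeasureTheory Real Set

noncomputable def zetaR (θ : ℝ) : ℝ := ∑' n : ℕ, ((n : ℝ) + 1) ^ (-θ)

noncomputable def aSeq (θ : ℝ) (n : ℕ) : ℝ :=
  4 * ∑ j ∈ Finset.Icc 1 (n - 1), (j : ℝ) ^ (-θ)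

noncomputable def wPiece (σ θ : ℝ) (n : ℕ) (ξ : ℝ) : ℝ :=
  if ξ < aSeq θ n + (n : ℝ) ^ (-θ) then (ξ - aSeq θ n) ^ σ
  else if ξ < aSeq θ n + 2 * (n : ℝ) ^ (-θ) then (n : ℝ) ^ (-(θ * σ))
  else if ξ < aSeq θ n + 3 * (n : ℝ) ^ (-θ) then (aSeq θ n + 3 * (n : ℝ) ^ (-θ) - ξ) ^ σ
  else 0

open Classical in
noncomputable def wFn (σ θ : ℝ) (ξ : ℝ) : ℝ :=
  if h : ∃ n : ℕ, 2 ≤ n ∧ aSeq θ n ≤ ξ ∧ ξ < aSeq θ (n + 1) then wPiece σ θ h.choose ξ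
  else 0

/-! On the block `[a_n + 3 n^{-θ}, a_{n+1})`, of length `n^{-θ} ≥ h`, the function `w` vanishes,
while `w(ξ + h)` vanishes for `ξ + h < a_{n+1}` and otherwise, as `h ≤ (n+1)^{-θ}`, lies on the
rising edge `(ξ + h - a_{n+1})^σ` of the next bump. So the integrand is
`(ξ - (a_{n+1} - h))_+^{σρ}`, whose integral over the block is `h^{σρ+1}/(σρ+1)`. -/

section aSeq

variable (θ : ℝ)

lemma aSeq_succ {n : ℕ} (hn : 1 ≤ n) : aSeq θ (n + 1) = aSeq θ n + 4 * (n : ℝ) ^ (-θ) := by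
  obtain ⟨m, rfl⟩ := Nat.exists_eq_add_of_le' hn
  simp only [aSeq, Nat.add_sub_cancel, Finset.sum_Icc_succ_top (Nat.le_add_left 1 m)]
  push_cast
  ring

lemma aSeq_mono : Monotone (aSeq θ) := fun m n hmn => by
  unfold aSeq
  gcongr

end aSeq

section wFn

variable (σ : ℝ) {θ : ℝ} {n : ℕ} {ξ : ℝ}

lemma wFn_eq_wPiece (hn : 2 ≤ n) (hξ : ξ ∈ Ico (aSeq θ n) (aSeq θ (n + 1))) :
    wFn σ θ ξ = wPiece σ θ n ξ := by
  have hex : ∃ m : ℕ, 2 ≤ m ∧ aSeq θ m ≤ ξ ∧ ξ < aSeq θ (m + 1) := ⟨n, hn, hξ⟩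
  rw [wFn, dif_pos hex]
  obtain ⟨-, hm₁, hm₂⟩ := hex.choose_spec
  congr 1
  by_contra hne
  rcases lt_or_gt_of_ne hne with hlt | hlt
  · exact (aSeq_mono θ (Nat.succ_le_of_lt hlt) |>.trans hξ.1).not_gt hm₂
  · exact (aSeq_mono θ (Nat.succ_le_of_lt hlt) |>.trans hm₁).not_gt hξ.2

lemma wFn_eq_zero_of_mem_Ico (hn : 2 ≤ n)
    (hξ : ξ ∈ Ico (aSeq θ n + 3 * (n : ℝ) ^ (-θ)) (aSeq θ (n + 1))) : wFn σ θ ξ = 0 := by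
  have ht : 0 ≤ (n : ℝ) ^ (-θ) := rpow_nonneg n.cast_nonneg _
  rw [wFn_eq_wPiece σ hn ⟨by linarith [hξ.1], hξ.2⟩, wPiece,
    if_neg (by linarith [hξ.1]), if_neg (by linarith [hξ.1]), if_neg (by linarith [hξ.1])]

lemma wFn_eq_rpow_of_mem_Ico (hn : 2 ≤ n)
    (hξ : ξ ∈ Ico (aSeq θ n) (aSeq θ n + (n : ℝ) ^ (-θ))) :
    wFn σ θ ξ = (ξ - aSeq θ n) ^ σ := by
  have ht : 0 ≤ (n : ℝ) ^ (-θ) := rpow_nonneg n.cast_nonneg _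
  have hξ' : ξ < aSeq θ (n + 1) := by rw [aSeq_succ θ (by omega)]; linarith [hξ.2]
  rw [wFn_eq_wPiece σ hn ⟨hξ.1, hξ'⟩, wPiece, if_pos hξ.2]

lemma abs_wFn_add_sub_wFn_rpow_eq_indicator {ρ h : ℝ} (hρ : ρ ≠ 0) (hn : 2 ≤ n) (hh₀ : 0 ≤ h)
    (hh₁ : h ≤ ((n : ℝ) + 1) ^ (-θ))
    (hξ : ξ ∈ Ico (aSeq θ n + 3 * (n : ℝ) ^ (-θ)) (aSeq θ (n + 1)))
    (hξh : ξ ≠ aSeq θ (n + 1) - h) :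
    |wFn σ θ (ξ + h) - wFn σ θ ξ| ^ ρ =
      (Ioi (aSeq θ (n + 1) - h)).indicator (fun ξ => (ξ - (aSeq θ (n + 1) - h)) ^ (σ * ρ)) ξ := by
  rw [wFn_eq_zero_of_mem_Ico σ hn hξ, sub_zero]
  rcases lt_or_gt_of_ne hξh with hlt | hgt
  · rw [wFn_eq_zero_of_mem_Ico σ hn ⟨by linarith [hξ.1], by linarith⟩, abs_zero,
      zero_rpow hρ, indicator_of_notMem (notMem_Ioi.mpr hlt.le)]
  · have hmem : ξ + h ∈ Ico (aSeq θ (n + 1)) (aSeq θ (n + 1) + ((n + 1 : ℕ) : ℝ) ^ (-θ)) := by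
      push_cast; constructor <;> linarith [hξ.2]
    rw [wFn_eq_rpow_of_mem_Ico σ (by omega) hmem, indicator_of_mem (mem_Ioi.mpr hgt),
      abs_of_nonneg (rpow_nonneg (by linarith) σ), ← rpow_mul (by linarith), sub_sub_eq_add_sub]

end wFn

lemma integral_indicator_Ioi_rpow_sub {a b c p : ℝ} (hac : a ≤ c) (hcb : c ≤ b) (hp : -1 < p) :
    ∫ ξ in a..b, (Ioi c).indicator (fun ξ => (ξ - c) ^ p) ξ = (b - c) ^ (p + 1) / (p + 1) := by
  rw [intervalIntegral.integral_of_le (hac.trans hcb), setIntegral_indicator measurableSet_Ioi,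
    Ioc_inter_Ioi, sup_eq_right.mpr hac, ← intervalIntegral.integral_of_le hcb,
    intervalIntegral.integral_comp_sub_right (fun x => x ^ p) c, sub_self,
    integral_rpow (Or.inl hp), zero_rpow (by linarith), sub_zero]

theorem stmt10_general (σ θ ρ : ℝ) (hσ0 : 0 < σ) (hθ : 1 < θ) (hρ : 0 < ρ) :
    ∀ n : ℕ, 2 ≤ n → ∀ h : ℝ, 0 < h → h ≤ ((n : ℝ) + 1) ^ (-θ) →
      (∫ ξ in (aSeq θ n + 3 * (n : ℝ) ^ (-θ))..(aSeq θ n + 4 * (n : ℝ) ^ (-θ)),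
          |wFn σ θ (ξ + h) - wFn σ θ ξ| ^ ρ) = h ^ (σ * ρ + 1) / (σ * ρ + 1) := by
  intro n hn h hh₀ hh₁
  have hA : aSeq θ n + 4 * (n : ℝ) ^ (-θ) = aSeq θ (n + 1) := (aSeq_succ θ (by omega)).symm
  have hht : h ≤ (n : ℝ) ^ (-θ) :=
    hh₁.trans (rpow_le_rpow_of_nonpos (by positivity) (by linarith) (by linarith))
  rw [hA]
  calc _ = ∫ ξ in (aSeq θ n + 3 * (n : ℝ) ^ (-θ))..aSeq θ (n + 1),
          (Ioi (aSeq θ (n + 1) - h)).indicator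
            (fun ξ => (ξ - (aSeq θ (n + 1) - h)) ^ (σ * ρ)) ξ := by
        refine intervalIntegral.integral_congr_ae ?_
        filter_upwards [volume.ae_ne (aSeq θ (n + 1)), volume.ae_ne (aSeq θ (n + 1) - h)]
          with ξ hξA hξh hξ
        rw [uIoc_of_le (by linarith)] at hξ
        exact abs_wFn_add_sub_wFn_rpow_eq_indicator σ hρ.ne' hn hh₀.le hh₁
          ⟨hξ.1.le, lt_of_le_of_ne hξ.2 hξA⟩ hξh
    _ = h ^ (σ * ρ + 1) / (σ * ρ + 1) := by
        rw [integral_indicator_Ioi_rpow_sub (by linarith) (by linarith)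
          (by nlinarith [mul_pos hσ0 hρ]), sub_sub_cancel]

/-- For 0 < σ < 1 < θ, 0 < ρ < ∞, n ≥ 2 and 0 < h ≤ (n+1)^{-θ}:
∫_{a_{n,θ}+3n^{-θ}}^{a_{n,θ}+4n^{-θ}} |w_{σ,θ}(ξ+h) − w_{σ,θ}(ξ)|^ρ dξ = h^{σρ+1}/(σρ+1). -/
theorem stmt10 (σ θ ρ : ℝ) (hσ0 : 0 < σ) (hσ1 : σ < 1) (hθ : 1 < θ) (hρ : 0 < ρ) :
    ∀ n : ℕ, 2 ≤ n → ∀ h : ℝ, 0 < h → h ≤ ((n : ℝ) + 1) ^ (-θ) →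
      (∫ ξ in (aSeq θ n + 3 * (n : ℝ) ^ (-θ))..(aSeq θ n + 4 * (n : ℝ) ^ (-θ)),
          |wFn σ θ (ξ + h) - wFn σ θ ξ| ^ ρ) = h ^ (σ * ρ + 1) / (σ * ρ + 1) :=
  stmt10_general σ θ ρ hσ0 hθ hρ
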